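/- arXiv:1506.07817 — 2 statements merged into one kernel-verified Lean document; each statement's English description precedes it below -/
import Mathlib

section
/- Let n be a composite number (i.e., n ≥ 2 and n is not prime) and let Z_n be the cyclic group of order n. Then the diameter of the strong power graph P_s(Z_n) equals 2. -/
/-- The strong power graph of the cyclic group `ZMod n` (written additively):
two distinct vertices `x` and `y` are adjacent iff `a • x = b • y` for some
positive integers `a, b < n`. -/
def strongPowerGraphZ (n : ℕ) : SimpleGraph (ZMod n) where
  Adj x y := x ≠ y ∧ ∃ a b : ℕ, 0 < a ∧ a < n ∧ 0 < b ∧ b < n ∧ a • x = b • y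
  symm := ⟨by
    rintro x y ⟨h, a, b, ha, ha', hb, hb', hab⟩
    exact ⟨h.symm, b, a, hb, hb', ha, ha', hab.symm⟩⟩
  loopless := ⟨by
    rintro x ⟨h, -⟩
    exact h rfl⟩

/-! In `ZMod n` the units are the generators, so a unit `y` is adjacent to every other nonzero `x`
(as `1 • x = k • y` for some `0 < k < n`), while two non-units `x, y` satisfy `a • x = 0 = b • y`
with `a, b` their additive orders, which are proper divisors of `n`. Hence the nonzero elements form
a clique. The neighbours of `0` are exactly the nonzero non-units; when `n` is composite there is
one, `w`, so every unit `y` is joined to `0` by the path `0 - w - y`. Finally `0` and the unit `1`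
are not adjacent, so the diameter is exactly `2`. -/

namespace SimpleGraph

variable {V : Type*} {G : SimpleGraph V}

lemma edist_le_two_of_adj_of_adj {u v w : V} (huw : G.Adj u w) (hwv : G.Adj w v) :
    G.edist u v ≤ 2 :=
  (Walk.cons huw (Walk.cons hwv .nil)).edist_le

lemma diam_eq_two_of_forall_edist_le_two (h : ∀ x y, G.edist x y ≤ 2) {u v : V} (huv : u ≠ v)
    (hnadj : ¬G.Adj u v) : G.diam = 2 := by
  have two_le : 2 ≤ G.edist u v := by
    by_contra! hlt
    have : G.edist u v ≤ 1 := Order.le_of_lt_succ hlt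
    exact (edist_le_one_iff_adj_or_eq.mp this).elim hnadj huv
  have hediam : G.ediam = 2 :=
    le_antisymm (ediam_le_of_edist_le h) (two_le.trans edist_le_ediam)
  rw [diam, hediam]
  rfl

end SimpleGraph

namespace ZMod

variable {n : ℕ}

lemma exists_nsmul_eq_zero_iff_not_isUnit [NeZero n] (x : ZMod n) :
    (∃ a : ℕ, 0 < a ∧ a < n ∧ a • x = 0) ↔ ¬IsUnit x := by
  constructor
  · rintro ⟨a, ha, han, hax⟩ hx
    rw [nsmul_eq_mul, hx.mul_left_eq_zero, natCast_eq_zero_iff] at hax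
    exact absurd (Nat.le_of_dvd ha hax) (not_le.mpr han)
  · intro hx
    have hgcd : n.gcd x.val ≠ 1 := by
      rw [← natCast_zmod_val x, isUnit_iff_coprime, Nat.coprime_comm] at hx
      exact hx
    have hgcd_pos : 0 < n.gcd x.val := Nat.gcd_pos_of_pos_left _ (NeZero.pos n)
    have horder : addOrderOf x = n / n.gcd x.val := by
      rw [← addOrderOf_coe _ (NeZero.ne n), natCast_zmod_val]
    refine ⟨addOrderOf x, addOrderOf_pos x, ?_, addOrderOf_nsmul_eq_zero x⟩
    rw [horder]
    exact Nat.div_lt_self (NeZero.pos n) (by omega)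

lemma exists_ne_zero_not_isUnit_of_not_prime (hn : 2 ≤ n) (hnp : ¬n.Prime) :
    ∃ w : ZMod n, w ≠ 0 ∧ ¬IsUnit w := by
  obtain ⟨d, hdn, hd, hdlt⟩ := Nat.exists_dvd_of_not_prime2 hn hnp
  refine ⟨d, ?_, ?_⟩
  · rw [Ne, natCast_eq_zero_iff]
    exact fun hnd => absurd (Nat.le_of_dvd (by omega) hnd) (not_le.mpr hdlt)
  · rw [isUnit_iff_coprime]
    exact fun hcop => by have := hcop.eq_one_of_dvd hdn; omega

end ZMod

section strongPowerGraphZ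

variable {n : ℕ}

lemma strongPowerGraphZ_adj_of_isUnit (hn : 1 < n) {x y : ZMod n} (hxy : x ≠ y) (hx : x ≠ 0)
    (hy : IsUnit y) : (strongPowerGraphZ n).Adj x y := by
  have : NeZero n := ⟨by omega⟩
  set k := x * y⁻¹
  have hky : k * y = x := by rw [mul_assoc, mul_comm y⁻¹, ZMod.mul_inv_of_unit y hy, mul_one]
  have hk : k ≠ 0 := by rintro hk; rw [hk, zero_mul] at hky; exact hx hky.symm
  refine ⟨hxy, 1, k.val, one_pos, hn, Nat.pos_of_ne_zero ((ZMod.val_ne_zero k).mpr hk),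
    k.val_lt, ?_⟩
  rw [one_smul, nsmul_eq_mul, ZMod.natCast_zmod_val, hky]

lemma strongPowerGraphZ_adj_of_ne_zero (hn : 1 < n) {x y : ZMod n} (hxy : x ≠ y) (hx : x ≠ 0)
    (hy : y ≠ 0) : (strongPowerGraphZ n).Adj x y := by
  have : NeZero n := ⟨by omega⟩
  by_cases hyu : IsUnit y
  · exact strongPowerGraphZ_adj_of_isUnit hn hxy hx hyu
  by_cases hxu : IsUnit x
  · exact (strongPowerGraphZ_adj_of_isUnit hn hxy.symm hy hxu).symm
  obtain ⟨a, ha, han, hax⟩ := (ZMod.exists_nsmul_eq_zero_iff_not_isUnit x).mpr hxu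
  obtain ⟨b, hb, hbn, hby⟩ := (ZMod.exists_nsmul_eq_zero_iff_not_isUnit y).mpr hyu
  exact ⟨hxy, a, b, ha, han, hb, hbn, hax.trans hby.symm⟩

lemma strongPowerGraphZ_adj_zero_iff (hn : 1 < n) {y : ZMod n} :
    (strongPowerGraphZ n).Adj 0 y ↔ y ≠ 0 ∧ ¬IsUnit y := by
  have : NeZero n := ⟨by omega⟩
  rw [← ZMod.exists_nsmul_eq_zero_iff_not_isUnit]
  constructor
  · rintro ⟨hy, _, b, -, -, hb, hbn, hby⟩
    exact ⟨Ne.symm hy, b, hb, hbn, by rw [← hby, smul_zero]⟩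
  · rintro ⟨hy, b, hb, hbn, hby⟩
    exact ⟨Ne.symm hy, 1, b, one_pos, hn, hb, hbn, by rw [hby, smul_zero]⟩

lemma strongPowerGraphZ_edist_zero_le_two (hn : 1 < n) {w : ZMod n} (hw0 : w ≠ 0)
    (hw : ¬IsUnit w) (y : ZMod n) : (strongPowerGraphZ n).edist 0 y ≤ 2 := by
  rcases eq_or_ne y 0 with rfl | hy
  · simp
  by_cases hyu : IsUnit y
  · have hwy : w ≠ y := fun h => hw (h ▸ hyu)
    exact SimpleGraph.edist_le_two_of_adj_of_adj
      ((strongPowerGraphZ_adj_zero_iff hn).mpr ⟨hw0, hw⟩)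
      (strongPowerGraphZ_adj_of_isUnit hn hwy hw0 hyu)
  · have hadj := (strongPowerGraphZ_adj_zero_iff hn).mpr ⟨hy, hyu⟩
    exact (SimpleGraph.edist_eq_one_iff_adj.mpr hadj).trans_le one_le_two

lemma strongPowerGraphZ_edist_le_two (hn : 1 < n) {w : ZMod n} (hw0 : w ≠ 0) (hw : ¬IsUnit w)
    (x y : ZMod n) : (strongPowerGraphZ n).edist x y ≤ 2 := by
  rcases eq_or_ne x 0 with rfl | hx
  · exact strongPowerGraphZ_edist_zero_le_two hn hw0 hw y
  rcases eq_or_ne y 0 with rfl | hy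
  · rw [SimpleGraph.edist_comm]
    exact strongPowerGraphZ_edist_zero_le_two hn hw0 hw x
  rcases eq_or_ne x y with rfl | hxy
  · simp
  have hadj := strongPowerGraphZ_adj_of_ne_zero hn hxy hx hy
  exact (SimpleGraph.edist_eq_one_iff_adj.mpr hadj).trans_le one_le_two

end strongPowerGraphZ

/-- For a composite number `n`, the diameter of the strong power graph of
`ZMod n` equals `2`. -/
theorem strongPowerGraphZ_diam_eq_two (n : ℕ) (hn : 2 ≤ n) (hnp : ¬ n.Prime) :
    (strongPowerGraphZ n).diam = 2 := by
  have : Nontrivial (ZMod n) := ZMod.nontrivial_iff.mpr (by omega)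
  obtain ⟨w, hw0, hw⟩ := ZMod.exists_ne_zero_not_isUnit_of_not_prime hn hnp
  refine SimpleGraph.diam_eq_two_of_forall_edist_le_two
    (strongPowerGraphZ_edist_le_two hn hw0 hw) zero_ne_one ?_
  rw [strongPowerGraphZ_adj_zero_iff hn]
  exact fun h => h.2 isUnit_one
end

section
/- Let G be a finite group of order n that is not cyclic. Then the characteristic polynomial of the adjacency matrix of the strong power graph P_s(G) equals (x - (n-1)) · (x+1)^{n-1}; equivalently, the adjacency spectrum of P_s(G) consists of the eigenvalue n-1 with multiplicity 1 and the eigenvalue -1 with multiplicity n-1. -/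
/-- The strong power graph of a finite group `G` of order `n`: two distinct
vertices `x` and `y` are adjacent iff `x ^ a = y ^ b` for some positive
integers `a, b < n`. -/
def strongPowerGraph (G : Type*) [Group G] [Fintype G] : SimpleGraph G where
  Adj x y := x ≠ y ∧ ∃ a b : ℕ, 0 < a ∧ a < Fintype.card G ∧ 0 < b ∧ b < Fintype.card G ∧
    x ^ a = y ^ b
  symm := by
    refine ⟨?_⟩
    rintro x y ⟨h, a, b, ha, ha', hb, hb', hab⟩
    exact ⟨h.symm, b, a, hb, hb', ha, ha', hab.symm⟩
  loopless := by
    refine ⟨?_⟩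
    rintro x ⟨h, -⟩
    exact h rfl

/-- The distance matrix (with real entries) of the strong power graph of `G`. -/
noncomputable def distMatrixG (G : Type*) [Group G] [Fintype G] : Matrix G G ℝ :=
  Matrix.of fun i j => ((strongPowerGraph G).dist i j : ℝ)

open Classical in
/-- The adjacency matrix (with real entries) of the strong power graph of `G`. -/
noncomputable def adjMatrixG (G : Type*) [Group G] [Fintype G] : Matrix G G ℝ :=
  Matrix.of fun i j => if (strongPowerGraph G).Adj i j then 1 else 0

/-! In a non-cyclic group of order `n` every element has order less than `n`, so for distinct
`x`, `y` the equation `x ^ orderOf x = 1 = y ^ orderOf y` makes them adjacent: the strong power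
graph is complete and its adjacency matrix is `J - I`. The rank-one matrix `J = 1 1ᵀ` has
characteristic polynomial `X ^ n - n X ^ (n - 1)`, and shifting the variable by `1` gives the
claim. -/

open Polynomial Matrix

theorem Matrix.charpoly_of_one_sub_one {R n : Type*} [CommRing R] [Fintype n] [DecidableEq n]
    [Nonempty n] :
    (of 1 - 1 : Matrix n n R).charpoly =
      (X - C ((Fintype.card n : R) - 1)) * (X + 1) ^ (Fintype.card n - 1) := by
  obtain ⟨k, hk⟩ := Nat.exists_eq_add_one.mpr (Fintype.card_pos (α := n))
  have hJ : (of 1 : Matrix n n R) = vecMulVec 1 1 := by ext; simp [vecMulVec_apply]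
  rw [← (scalar n).map_one, charpoly_sub_scalar, hJ, charpoly_vecMulVec, hk]
  simp only [one_dotProduct_one, hk, Nat.cast_add, Nat.cast_one, add_tsub_cancel_right,
    smul_eq_C_mul, map_add, map_natCast, map_one, sub_comp, mul_comp, pow_comp, X_comp, add_comp,
    natCast_comp, one_comp, add_sub_cancel_right]
  ring

theorem orderOf_lt_card_of_not_isCyclic {G : Type*} [Group G] [Fintype G] (hG : ¬IsCyclic G)
    (x : G) : orderOf x < Fintype.card G :=
  orderOf_le_card_univ.lt_of_ne fun h ↦
    hG (isCyclic_of_orderOf_eq_card x (h.trans Nat.card_eq_fintype_card.symm))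

theorem strongPowerGraph_eq_top_of_not_isCyclic {G : Type*} [Group G] [Fintype G]
    (hG : ¬IsCyclic G) : strongPowerGraph G = ⊤ := by
  ext x y
  refine ⟨fun h ↦ h.1, fun hxy ↦ ⟨hxy, orderOf x, orderOf y, orderOf_pos x,
    orderOf_lt_card_of_not_isCyclic hG x, orderOf_pos y, orderOf_lt_card_of_not_isCyclic hG y, ?_⟩⟩
  rw [pow_orderOf_eq_one, pow_orderOf_eq_one]

theorem adjMatrixG_of_not_isCyclic {G : Type*} [Group G] [Fintype G] [DecidableEq G]
    (hG : ¬IsCyclic G) : adjMatrixG G = of 1 - 1 := by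
  ext x y
  simp [adjMatrixG, strongPowerGraph_eq_top_of_not_isCyclic hG, one_apply, sub_ite]

open Polynomial in
/-- If a finite group `G` of order `n` is not cyclic, then the characteristic polynomial
of the adjacency matrix of its strong power graph is `(x - (n-1)) * (x+1)^(n-1)`;
equivalently its adjacency spectrum is `n-1` (multiplicity 1) and `-1` (multiplicity `n-1`). -/
theorem adjMatrixG_charpoly_of_not_isCyclic
    (G : Type*) [Group G] [Fintype G] [DecidableEq G] (hG : ¬ IsCyclic G) :
    (adjMatrixG G).charpoly =
      (X - C ((Fintype.card G : ℝ) - 1)) * (X + 1) ^ (Fintype.card G - 1) := by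
  rw [adjMatrixG_of_not_isCyclic hG, charpoly_of_one_sub_one]
end
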